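/- arXiv:1602.08542 — 5 statements merged into one kernel-verified Lean document; each statement's English description precedes it below -/
import Mathlib

section
/- Let S ∈ ℝ and let (Z, v₁, v₂, P) be functions ℝ × ℝ → ℝ of (t,x), three times continuously differentiable, solving the dimensionless Choi–Camassa system with parameter S at every point. Then for any constants t₀, x₀, C ∈ ℝ and any differentiable function P₀ : ℝ → ℝ, the transformed fields Z*(t,x) = Z(t−t₀, x−x₀−Ct), vᵢ*(t,x) = vᵢ(t−t₀, x−x₀−Ct) + C (i = 1,2), P*(t,x) = P(t−t₀, x−x₀−Ct) + P₀(t) also solve the dimensionless Choi–Camassa system with parameter S at every point. -/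
/-- Partial derivative in the first (time) variable. -/
noncomputable def pdt (f : ℝ × ℝ → ℝ) (p : ℝ × ℝ) : ℝ := deriv (fun s => f (s, p.2)) p.1

/-- Partial derivative in the second (space) variable. -/
noncomputable def pdx (f : ℝ × ℝ → ℝ) (p : ℝ × ℝ) : ℝ := deriv (fun y => f (p.1, y)) p.2

/-- G_i = ∂ₜ∂ₓv + v ∂ₓ²v − (∂ₓv)². -/
noncomputable def Gpd (v : ℝ × ℝ → ℝ) (p : ℝ × ℝ) : ℝ :=
  pdt (pdx v) p + v p * pdx (pdx v) p - (pdx v p) ^ 2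

/-- The dimensionless Choi–Camassa system with density-ratio parameter `S`. -/
def CCsystem (S : ℝ) (Z v₁ v₂ P : ℝ × ℝ → ℝ) : Prop :=
  (∀ p : ℝ × ℝ, pdt Z p + pdx (fun q => Z q * v₁ q) p = 0) ∧
  (∀ p : ℝ × ℝ, pdt Z p + pdx (fun q => Z q * v₂ q) p - pdx v₂ p = 0) ∧
  (∀ p : ℝ × ℝ, pdt v₁ p + v₁ p * pdx v₁ p - pdx Z p + pdx P p
      - Z p * pdx Z p * Gpd v₁ p - (1/3) * (Z p) ^ 2 * pdx (Gpd v₁) p = 0) ∧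
  (∀ p : ℝ × ℝ, pdt v₂ p + v₂ p * pdx v₂ p - pdx Z p + S * pdx P p
      - (1/3) * (1 - Z p) ^ 2 * pdx (Gpd v₂) p + (1 - Z p) * pdx Z p * Gpd v₂ p = 0)

/- Under the Galilei map `σ(t, x) = (t - t₀, x - x₀ - C t)` the chain rule gives
`∂ₓ(f ∘ σ) = (∂ₓf) ∘ σ` and `∂ₜ(f ∘ σ) = (∂ₜf - C ∂ₓf) ∘ σ`. Boosting a velocity by `C` turns the
extra `-C ∂ₓ` back into the convective term, so the material derivative `∂ₜ + v ∂ₓ`, hence `G`,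
the mass fluxes and both momentum equations, are carried to themselves; `P₀(t)` is invisible
to `∂ₓ`. -/

lemma pdx_eq_fderiv {f : ℝ × ℝ → ℝ} {p : ℝ × ℝ} (hf : DifferentiableAt ℝ f p) :
    pdx f p = fderiv ℝ f p (0, 1) :=
  (hf.hasFDerivAt.comp_hasDerivAt p.2
    ((hasDerivAt_const p.2 p.1).prodMk (hasDerivAt_id p.2))).deriv

lemma pdt_eq_fderiv {f : ℝ × ℝ → ℝ} {p : ℝ × ℝ} (hf : DifferentiableAt ℝ f p) :
    pdt f p = fderiv ℝ f p (1, 0) :=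
  (hf.hasFDerivAt.comp_hasDerivAt p.1
    ((hasDerivAt_id p.1).prodMk (hasDerivAt_const p.1 p.2))).deriv

lemma contDiff_pdx {f : ℝ × ℝ → ℝ} {n : WithTop ℕ∞} (hf : ContDiff ℝ (n + 1) f) :
    ContDiff ℝ n (pdx f) := by
  have hd : Differentiable ℝ f := hf.differentiable (by simp)
  rw [show pdx f = fun p => fderiv ℝ f p (0, 1) from funext fun p => pdx_eq_fderiv (hd p)]
  exact (hf.fderiv_right le_rfl).clm_apply contDiff_const

lemma pdx_add_fun_fst (f : ℝ × ℝ → ℝ) (g : ℝ → ℝ) (p : ℝ × ℝ) :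
    pdx (fun q => f q + g q.1) p = pdx f p :=
  deriv_add_const (g p.1)

lemma pdt_add_const (f : ℝ × ℝ → ℝ) (c : ℝ) (p : ℝ × ℝ) :
    pdt (fun q => f q + c) p = pdt f p :=
  deriv_add_const c

lemma pdx_mul {f g : ℝ × ℝ → ℝ} {p : ℝ × ℝ}
    (hf : DifferentiableAt ℝ f p) (hg : DifferentiableAt ℝ g p) :
    pdx (fun q => f q * g q) p = pdx f p * g p + f p * pdx g p := by
  have hc : DifferentiableAt ℝ (fun y : ℝ => ((p.1, y) : ℝ × ℝ)) p.2 := by fun_prop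
  exact deriv_fun_mul (hf.comp p.2 hc) (hg.comp p.2 hc)

section Galilei

variable (t₀ x₀ C : ℝ)

def galilei (p : ℝ × ℝ) : ℝ × ℝ := (p.1 - t₀, p.2 - x₀ - C * p.1)

def galileiBoost (v : ℝ × ℝ → ℝ) (p : ℝ × ℝ) : ℝ := v (galilei t₀ x₀ C p) + C

lemma pdx_comp_galilei (f : ℝ × ℝ → ℝ) (p : ℝ × ℝ) :
    pdx (fun q => f (galilei t₀ x₀ C q)) p = pdx f (galilei t₀ x₀ C p) := by
  have h : ∀ y : ℝ, y - x₀ - C * p.1 = y - (x₀ + C * p.1) := fun y => by ring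
  simp only [pdx, galilei, h]
  exact deriv_comp_sub_const (fun y => f (p.1 - t₀, y)) (x₀ + C * p.1) p.2

lemma pdt_comp_galilei {f : ℝ × ℝ → ℝ} {p : ℝ × ℝ}
    (hf : DifferentiableAt ℝ f (galilei t₀ x₀ C p)) :
    pdt (fun q => f (galilei t₀ x₀ C q)) p
      = pdt f (galilei t₀ x₀ C p) - C * pdx f (galilei t₀ x₀ C p) := by
  have hpath : HasDerivAt (fun s => galilei t₀ x₀ C (s, p.2)) (1, -C) p.1 := by
    have h1 : HasDerivAt (fun s : ℝ => s - t₀) 1 p.1 := (hasDerivAt_id p.1).sub_const t₀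
    have h2 : HasDerivAt (fun s : ℝ => p.2 - x₀ - C * s) (-C) p.1 := by
      simpa using ((hasDerivAt_id p.1).const_mul C).const_sub (p.2 - x₀)
    exact h1.prodMk h2
  have hcomp : HasDerivAt (fun s => f (galilei t₀ x₀ C (s, p.2)))
      (fderiv ℝ f (galilei t₀ x₀ C p) (1, -C)) p.1 :=
    hf.hasFDerivAt.comp_hasDerivAt p.1 hpath
  have hdir : ((1, -C) : ℝ × ℝ) = (1, 0) - C • (0, 1) := by simp
  rw [pdt, hcomp.deriv, pdt_eq_fderiv hf, pdx_eq_fderiv hf, hdir, map_sub, map_smul, smul_eq_mul]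

lemma pdx_galileiBoost (v : ℝ × ℝ → ℝ) :
    pdx (galileiBoost t₀ x₀ C v) = fun p => pdx v (galilei t₀ x₀ C p) :=
  funext fun p => (pdx_add_fun_fst _ (fun _ => C) p).trans (pdx_comp_galilei t₀ x₀ C v p)

lemma pdt_galileiBoost {v : ℝ × ℝ → ℝ} {p : ℝ × ℝ}
    (hv : DifferentiableAt ℝ v (galilei t₀ x₀ C p)) :
    pdt (galileiBoost t₀ x₀ C v) p
      = pdt v (galilei t₀ x₀ C p) - C * pdx v (galilei t₀ x₀ C p) :=
  (pdt_add_const _ C p).trans (pdt_comp_galilei t₀ x₀ C hv)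

lemma materialDeriv_galileiBoost {v : ℝ × ℝ → ℝ} {p : ℝ × ℝ}
    (hv : DifferentiableAt ℝ v (galilei t₀ x₀ C p)) :
    pdt (galileiBoost t₀ x₀ C v) p + galileiBoost t₀ x₀ C v p * pdx (galileiBoost t₀ x₀ C v) p
      = pdt v (galilei t₀ x₀ C p) + v (galilei t₀ x₀ C p) * pdx v (galilei t₀ x₀ C p) := by
  rw [pdt_galileiBoost t₀ x₀ C hv, pdx_galileiBoost, galileiBoost]
  ring

lemma Gpd_galileiBoost {v : ℝ × ℝ → ℝ} (hv : Differentiable ℝ (pdx v)) :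
    Gpd (galileiBoost t₀ x₀ C v) = fun p => Gpd v (galilei t₀ x₀ C p) := by
  funext p
  simp only [Gpd, pdx_galileiBoost, pdt_comp_galilei t₀ x₀ C (hv _), pdx_comp_galilei,
    galileiBoost]
  ring

lemma massFlux_galilei {Z v : ℝ × ℝ → ℝ} {p : ℝ × ℝ}
    (hZ : DifferentiableAt ℝ Z (galilei t₀ x₀ C p))
    (hv : DifferentiableAt ℝ v (galilei t₀ x₀ C p)) :
    pdt (fun q => Z (galilei t₀ x₀ C q)) p
        + pdx (fun q => Z (galilei t₀ x₀ C q) * galileiBoost t₀ x₀ C v q) p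
      = pdt Z (galilei t₀ x₀ C p) + pdx (fun q => Z q * v q) (galilei t₀ x₀ C p) := by
  have hσ : DifferentiableAt ℝ (galilei t₀ x₀ C) p := by unfold galilei; fun_prop
  have hZσ : DifferentiableAt ℝ (fun q => Z (galilei t₀ x₀ C q)) p := hZ.comp p hσ
  have hvσ : DifferentiableAt ℝ (galileiBoost t₀ x₀ C v) p := (hv.comp p hσ).add_const C
  rw [pdx_mul hZσ hvσ, pdx_mul hZ hv, pdt_comp_galilei t₀ x₀ C hZ, pdx_comp_galilei,
    pdx_galileiBoost, galileiBoost]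
  ring

end Galilei

theorem stmt1_general (S : ℝ) (Z v₁ v₂ P : ℝ × ℝ → ℝ)
    (hZ : ContDiff ℝ 3 Z) (hv₁ : ContDiff ℝ 3 v₁) (hv₂ : ContDiff ℝ 3 v₂)
    (hsol : CCsystem S Z v₁ v₂ P)
    (t₀ x₀ C : ℝ) (P₀ : ℝ → ℝ) :
    CCsystem S
      (fun p => Z (p.1 - t₀, p.2 - x₀ - C * p.1))
      (fun p => v₁ (p.1 - t₀, p.2 - x₀ - C * p.1) + C)
      (fun p => v₂ (p.1 - t₀, p.2 - x₀ - C * p.1) + C)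
      (fun p => P (p.1 - t₀, p.2 - x₀ - C * p.1) + P₀ p.1) := by
  obtain ⟨h₁, h₂, h₃, h₄⟩ := hsol
  have hZd : Differentiable ℝ Z := hZ.differentiable (by norm_num)
  have hv₁d : Differentiable ℝ v₁ := hv₁.differentiable (by norm_num)
  have hv₂d : Differentiable ℝ v₂ := hv₂.differentiable (by norm_num)
  have hdv₁ : Differentiable ℝ (pdx v₁) :=
    (contDiff_pdx (n := 2) hv₁).differentiable (by norm_num)
  have hdv₂ : Differentiable ℝ (pdx v₂) :=
    (contDiff_pdx (n := 2) hv₂).differentiable (by norm_num)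
  have hPx : ∀ p, pdx (fun q => P (galilei t₀ x₀ C q) + P₀ q.1) p = pdx P (galilei t₀ x₀ C p) :=
    fun p => (pdx_add_fun_fst _ P₀ p).trans (pdx_comp_galilei t₀ x₀ C P p)
  show CCsystem S (fun p => Z (galilei t₀ x₀ C p)) (galileiBoost t₀ x₀ C v₁)
    (galileiBoost t₀ x₀ C v₂) (fun p => P (galilei t₀ x₀ C p) + P₀ p.1)
  refine ⟨fun p => ?_, fun p => ?_, fun p => ?_, fun p => ?_⟩
  · rw [massFlux_galilei t₀ x₀ C (hZd _) (hv₁d _)]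
    exact h₁ _
  · rw [massFlux_galilei t₀ x₀ C (hZd _) (hv₂d _), pdx_galileiBoost]
    exact h₂ _
  · rw [materialDeriv_galileiBoost t₀ x₀ C (hv₁d _), pdx_comp_galilei, hPx,
      Gpd_galileiBoost t₀ x₀ C hdv₁, pdx_comp_galilei]
    exact h₃ _
  · rw [materialDeriv_galileiBoost t₀ x₀ C (hv₂d _), pdx_comp_galilei, hPx,
      Gpd_galileiBoost t₀ x₀ C hdv₂, pdx_comp_galilei]
    exact h₄ _

theorem stmt1 (S : ℝ) (Z v₁ v₂ P : ℝ × ℝ → ℝ)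
    (hZ : ContDiff ℝ 3 Z) (hv₁ : ContDiff ℝ 3 v₁) (hv₂ : ContDiff ℝ 3 v₂)
    (hP : ContDiff ℝ 3 P)
    (hsol : CCsystem S Z v₁ v₂ P)
    (t₀ x₀ C : ℝ) (P₀ : ℝ → ℝ) (hP₀ : Differentiable ℝ P₀) :
    CCsystem S
      (fun p => Z (p.1 - t₀, p.2 - x₀ - C * p.1))
      (fun p => v₁ (p.1 - t₀, p.2 - x₀ - C * p.1) + C)
      (fun p => v₂ (p.1 - t₀, p.2 - x₀ - C * p.1) + C)
      (fun p => P (p.1 - t₀, p.2 - x₀ - C * p.1) + P₀ p.1) :=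
  stmt1_general S Z v₁ v₂ P hZ hv₁ hv₂ hsol t₀ x₀ C P₀
end

section
/- Let S ∈ (0,1) and A₄ = 3(1−S). Let B₁, B₂ ∈ ℝ with B₁ ≠ 0, set α₁ = −(A₄B₂/3)(B₁+B₂)² and α₀ = −α₁, and assume α₁ ≠ 0 and A₄B₁/(4α₁) > 0. Let γ ∈ ℝ satisfy γ² = A₄B₁/(4α₁), and set A₃ = −A₄(2B₁ + 3B₂ + 1), A₂ = A₄(B₁(2B₂+1) + 3B₂(B₂+1) + B₁(B₁+2B₂+1)), A₁ = 3α₁ − (A₂ + A₃ + A₄), A₀ = 3α₀. Then the function Z(r) = B₁·tanh²(γr) + B₂ satisfies, for all r ∈ ℝ: (α₁Z(r) + α₀)·(Z′(r))² = A₄Z(r)⁴ + A₃Z(r)³ + A₂Z(r)² + A₁Z(r) + A₀. -/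
/-!
Writing `t = tanh (γ r)`, the profile has `Z' = 2 B₁ γ t (1 - t²)`. Since `B₁ t² = Z - B₂` and
`B₁ (1 - t²) = B₁ + B₂ - Z`, the relation `4 α₁ γ² = A₄ B₁` gives `α₁ Z'² = A₄ (Z - B₂) (Z - (B₁ + B₂))²`.
With `α₀ = -α₁` the left-hand side is `A₄ (Z - 1) (Z - B₂) (Z - (B₁ + B₂))²`, and `A₀, …, A₃` are
exactly the coefficients of this quartic.
-/

/-- The solitary-wave profile Z(r) = B₁·tanh²(γr) + B₂. -/
noncomputable def Zsn (B₁ B₂ γ : ℝ) : ℝ → ℝ := fun r => B₁ * (Real.tanh (γ * r)) ^ 2 + B₂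

theorem Real.hasDerivAt_tanh (x : ℝ) : HasDerivAt Real.tanh (1 - Real.tanh x ^ 2) x := by
  have hquot : HasDerivAt (fun y => Real.sinh y / Real.cosh y) _ x :=
    (Real.hasDerivAt_sinh x).div (Real.hasDerivAt_cosh x) (Real.cosh_pos x).ne'
  rw [show Real.tanh = fun y => Real.sinh y / Real.cosh y from funext Real.tanh_eq_sinh_div_cosh]
  refine hquot.congr_deriv ?_
  beta_reduce
  have hcosh := (Real.cosh_pos x).ne'
  field_simp

theorem hasDerivAt_Zsn (B₁ B₂ γ r : ℝ) :
    HasDerivAt (Zsn B₁ B₂ γ)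
      (2 * B₁ * γ * Real.tanh (γ * r) * (1 - Real.tanh (γ * r) ^ 2)) r := by
  have hinner : HasDerivAt (fun r : ℝ => γ * r) γ r := by
    simpa using (hasDerivAt_id r).const_mul γ
  have htanh := (Real.hasDerivAt_tanh (γ * r)).comp r hinner
  refine (((htanh.pow 2).const_mul B₁).add_const B₂).congr_deriv ?_
  simp only [Function.comp_apply]
  ring

theorem mul_deriv_Zsn_sq {B₁ B₂ γ κ c : ℝ} (h : 4 * κ * γ ^ 2 = c * B₁) (r : ℝ) :
    κ * deriv (Zsn B₁ B₂ γ) r ^ 2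
      = c * (Zsn B₁ B₂ γ r - B₂) * (Zsn B₁ B₂ γ r - (B₁ + B₂)) ^ 2 := by
  rw [(hasDerivAt_Zsn B₁ B₂ γ r).deriv, Zsn]
  linear_combination
    B₁ * Real.tanh (γ * r) ^ 2 * (1 - Real.tanh (γ * r) ^ 2) ^ 2 * B₁ * h

theorem quartic_eq_mul_of_coeffs {A₄ A₃ A₂ A₁ A₀ B₁ B₂ α₁ : ℝ}
    (hα₁ : α₁ = -(A₄ * B₂ / 3) * (B₁ + B₂) ^ 2)
    (hA₃ : A₃ = -A₄ * (2 * B₁ + 3 * B₂ + 1))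
    (hA₂ : A₂ = A₄ * (B₁ * (2 * B₂ + 1) + 3 * B₂ * (B₂ + 1) + B₁ * (B₁ + 2 * B₂ + 1)))
    (hA₁ : A₁ = 3 * α₁ - (A₂ + A₃ + A₄)) (hA₀ : A₀ = -3 * α₁) (Z : ℝ) :
    A₄ * Z ^ 4 + A₃ * Z ^ 3 + A₂ * Z ^ 2 + A₁ * Z + A₀
      = A₄ * (Z - 1) * (Z - B₂) * (Z - (B₁ + B₂)) ^ 2 := by
  subst hA₀ hA₁ hA₂ hA₃ hα₁
  ring

theorem stmt10_general (A₄ B₁ B₂ α₀ α₁ γ A₃ A₂ A₁ A₀ : ℝ)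
    (hα₁ : α₁ = -(A₄ * B₂ / 3) * (B₁ + B₂) ^ 2) (hα₀ : α₀ = -α₁)
    (hα₁0 : α₁ ≠ 0)
    (hγ : γ ^ 2 = A₄ * B₁ / (4 * α₁))
    (hA₃ : A₃ = -A₄ * (2 * B₁ + 3 * B₂ + 1))
    (hA₂ : A₂ = A₄ * (B₁ * (2 * B₂ + 1) + 3 * B₂ * (B₂ + 1) + B₁ * (B₁ + 2 * B₂ + 1)))
    (hA₁ : A₁ = 3 * α₁ - (A₂ + A₃ + A₄)) (hA₀ : A₀ = 3 * α₀) :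
    ∀ r : ℝ, (α₁ * Zsn B₁ B₂ γ r + α₀) * (deriv (Zsn B₁ B₂ γ) r) ^ 2
      = A₄ * (Zsn B₁ B₂ γ r) ^ 4 + A₃ * (Zsn B₁ B₂ γ r) ^ 3
        + A₂ * (Zsn B₁ B₂ γ r) ^ 2 + A₁ * Zsn B₁ B₂ γ r + A₀ := by
  intro r
  have hγ' : 4 * α₁ * γ ^ 2 = A₄ * B₁ := by
    rw [hγ]
    field_simp
  set Z := Zsn B₁ B₂ γ r
  calc (α₁ * Z + α₀) * deriv (Zsn B₁ B₂ γ) r ^ 2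
      = (Z - 1) * (α₁ * deriv (Zsn B₁ B₂ γ) r ^ 2) := by rw [hα₀]; ring
    _ = A₄ * (Z - 1) * (Z - B₂) * (Z - (B₁ + B₂)) ^ 2 := by
        rw [mul_deriv_Zsn_sq hγ']; ring
    _ = _ := (quartic_eq_mul_of_coeffs hα₁ hA₃ hA₂ hA₁ (by rw [hA₀, hα₀]; ring) Z).symm

theorem stmt10 (S A₄ B₁ B₂ α₀ α₁ γ A₃ A₂ A₁ A₀ : ℝ)
    (hS : 0 < S) (hS1 : S < 1) (hA₄ : A₄ = 3 * (1 - S)) (hB₁ : B₁ ≠ 0)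
    (hα₁ : α₁ = -(A₄ * B₂ / 3) * (B₁ + B₂) ^ 2) (hα₀ : α₀ = -α₁)
    (hα₁0 : α₁ ≠ 0) (hpos : A₄ * B₁ / (4 * α₁) > 0)
    (hγ : γ ^ 2 = A₄ * B₁ / (4 * α₁))
    (hA₃ : A₃ = -A₄ * (2 * B₁ + 3 * B₂ + 1))
    (hA₂ : A₂ = A₄ * (B₁ * (2 * B₂ + 1) + 3 * B₂ * (B₂ + 1) + B₁ * (B₁ + 2 * B₂ + 1)))
    (hA₁ : A₁ = 3 * α₁ - (A₂ + A₃ + A₄)) (hA₀ : A₀ = 3 * α₀) :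
    ∀ r : ℝ, (α₁ * Zsn B₁ B₂ γ r + α₀) * (deriv (Zsn B₁ B₂ γ) r) ^ 2
      = A₄ * (Zsn B₁ B₂ γ r) ^ 4 + A₃ * (Zsn B₁ B₂ γ r) ^ 3
        + A₂ * (Zsn B₁ B₂ γ r) ^ 2 + A₁ * Zsn B₁ B₂ γ r + A₀ :=
  stmt10_general A₄ B₁ B₂ α₀ α₁ γ A₃ A₂ A₁ A₀ hα₁ hα₀ hα₁0 hγ hA₃ hA₂ hA₁ hA₀
end

section
/- Let γ ∈ ℝ, B₁ ∈ ℝ with B₁ ≠ 0, and B₂ ∈ ℝ with |B₂| > 1. Then tanh(γr) + B₂ ≠ 0 for all r ∈ ℝ, and the function Z(r) = B₁/(tanh(γr) + B₂) satisfies, for all r ∈ ℝ: (Z′(r))² = (γ²/B₁²)·((1 − B₂²)·Z(r)² + 2B₁B₂·Z(r) − B₁²)². -/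
/-- The kink-type profile Z(r) = B₁/(tanh(γr) + B₂). -/
noncomputable def Ztanh (B₁ B₂ γ : ℝ) : ℝ → ℝ := fun r => B₁ / (Real.tanh (γ * r) + B₂)

/-!
`t = tanh (γ r)` solves the Riccati equation `t' = γ (1 - t²)`, and the Möbius change of variables
`Z = B₁ / (t + B₂)` turns it into `Z' = -(γ / B₁) ((1 - B₂²) Z² + 2 B₁ B₂ Z - B₁²)`; squaring gives
the quartic equation. The denominator never vanishes because `|tanh| < 1 < |B₂|`.
-/

namespace Real

theorem hasDerivAt_tanh_s13 (x : ℝ) : HasDerivAt tanh (1 - tanh x ^ 2) x := by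
  rw [show tanh = fun y => sinh y / cosh y from funext tanh_eq_sinh_div_cosh]
  refine ((hasDerivAt_sinh x).div (hasDerivAt_cosh x) (cosh_pos x).ne').congr_deriv ?_
  field_simp

theorem hasDerivAt_tanh_const_mul (γ x : ℝ) :
    HasDerivAt (fun s => tanh (γ * s)) (γ * (1 - tanh (γ * x) ^ 2)) x := by
  have h := (hasDerivAt_tanh_s13 (γ * x)).comp x ((hasDerivAt_id x).const_mul γ)
  rwa [mul_one, mul_comm] at h

theorem tanh_add_ne_zero {b : ℝ} (hb : 1 < |b|) (x : ℝ) : tanh x + b ≠ 0 := by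
  intro h
  rw [eq_neg_of_add_eq_zero_right h, abs_neg] at hb
  exact (abs_tanh_lt_one x).not_gt hb

end Real

/-- At `B₁ = 0` the stated derivative is `0` because `γ / 0 = 0`. -/
theorem HasDerivAt.div_add_const_of_riccati {f : ℝ → ℝ} {γ B₁ B₂ r : ℝ}
    (hf : HasDerivAt f (γ * (1 - f r ^ 2)) r) (hden : f r + B₂ ≠ 0) :
    HasDerivAt (fun s => B₁ / (f s + B₂))
      (-(γ / B₁) * ((1 - B₂ ^ 2) * (B₁ / (f r + B₂)) ^ 2
        + 2 * B₁ * B₂ * (B₁ / (f r + B₂)) - B₁ ^ 2)) r := by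
  refine ((hasDerivAt_const r B₁).div (hf.add_const B₂) hden).congr_deriv ?_
  field_simp
  ring

theorem stmt13_general (γ B₁ B₂ : ℝ) (hB₂ : 1 < |B₂|) :
    (∀ r : ℝ, Real.tanh (γ * r) + B₂ ≠ 0) ∧
    (∀ r : ℝ, (deriv (Ztanh B₁ B₂ γ) r) ^ 2
      = (γ ^ 2 / B₁ ^ 2) *
        ((1 - B₂ ^ 2) * (Ztanh B₁ B₂ γ r) ^ 2 + 2 * B₁ * B₂ * Ztanh B₁ B₂ γ r - B₁ ^ 2) ^ 2) := by
  have hden (r : ℝ) : Real.tanh (γ * r) + B₂ ≠ 0 := Real.tanh_add_ne_zero hB₂ _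
  refine ⟨hden, fun r => ?_⟩
  have hZ := (Real.hasDerivAt_tanh_const_mul γ r).div_add_const_of_riccati (B₁ := B₁) (hden r)
  rw [show Ztanh B₁ B₂ γ = fun s => B₁ / (Real.tanh (γ * s) + B₂) from rfl, hZ.deriv]
  ring

theorem stmt13 (γ B₁ B₂ : ℝ) (hB₁ : B₁ ≠ 0) (hB₂ : 1 < |B₂|) :
    (∀ r : ℝ, Real.tanh (γ * r) + B₂ ≠ 0) ∧
    (∀ r : ℝ, (deriv (Ztanh B₁ B₂ γ) r) ^ 2
      = (γ ^ 2 / B₁ ^ 2) *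
        ((1 - B₂ ^ 2) * (Ztanh B₁ B₂ γ r) ^ 2 + 2 * B₁ * B₂ * Ztanh B₁ B₂ γ r - B₁ ^ 2) ^ 2) :=
  stmt13_general γ B₁ B₂ hB₂
end

section
/- Let h₁, h₂ > 0, H = h₁ + h₂, S ∈ (0,1), A₄ = 3(1−S), B₁ > 0, B₂ = h₁/H − B₁, and α₁ = −(A₄/3)(B₂ − 1)(B₁ + B₂ − 1)². Then α₁ > 0 and A₄B₁/(4α₁) > 0; moreover, setting γ = √(A₄B₁/(4α₁)) and λ = H/γ, one has (λ/h₂)² = (4/3)·(1 + h₂/(H·B₁)). -/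
theorem stmt17 (h₁ h₂ H S A₄ B₁ B₂ α₁ γ lam : ℝ)
    (hh₁ : 0 < h₁) (hh₂ : 0 < h₂) (hH : H = h₁ + h₂)
    (hS : 0 < S) (hS1 : S < 1) (hA₄ : A₄ = 3 * (1 - S))
    (hB₁ : 0 < B₁) (hB₂ : B₂ = h₁ / H - B₁)
    (hα₁ : α₁ = -(A₄ / 3) * (B₂ - 1) * (B₁ + B₂ - 1) ^ 2)
    (hγ : γ = Real.sqrt (A₄ * B₁ / (4 * α₁))) (hlam : lam = H / γ) :
    0 < α₁ ∧ 0 < A₄ * B₁ / (4 * α₁) ∧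
    (lam / h₂) ^ 2 = (4 / 3) * (1 + h₂ / (H * B₁)) := by
  have hHpos : 0 < H := by rw [hH]; linarith
  have hA₄pos : 0 < A₄ := by rw [hA₄]; linarith
  have hB₂1 : B₂ - 1 = -(h₂ / H + B₁) := by
    rw [hB₂]; field_simp; rw [hH]; ring
  have hBB : B₁ + B₂ - 1 = -(h₂ / H) := by
    rw [hB₂]; field_simp; rw [hH]; ring
  have hα₁' : α₁ = (A₄ / 3) * (h₂ / H + B₁) * (h₂ / H) ^ 2 := by
    rw [hα₁, hB₂1, hBB]; ring
  have hα₁pos : 0 < α₁ := by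
    rw [hα₁']
    have := div_pos hh₂ hHpos
    positivity
  have hxpos : 0 < A₄ * B₁ / (4 * α₁) := by positivity
  refine ⟨hα₁pos, hxpos, ?_⟩
  have hγ2 : γ ^ 2 = A₄ * B₁ / (4 * α₁) := by
    rw [hγ, Real.sq_sqrt hxpos.le]
  have hγpos : 0 < γ := by rw [hγ]; exact Real.sqrt_pos.mpr hxpos
  rw [hlam, div_pow, div_pow, hγ2, hα₁']
  field_simp
  ring
end

section
/- Let h₁, h₂ > 0, H = h₁ + h₂, S ∈ (0,1), A₄ = 3(1−S), B₁ < 0, B₂ = h₁/H − B₁, and α₁ = −(A₄B₂/3)(B₁ + B₂)². Then A₄B₁/(4α₁) > 0; moreover, setting γ = √(A₄B₁/(4α₁)) and λ = H/γ, one has (λ/h₁)² = (4/3)·(1 + h₁/(H·|B₁|)). -/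
/-! With `s = h₁/H` the mode coefficients satisfy `B₁ + B₂ = s`, so `α₁ = -(A₄ B₂ / 3) s²` and
`A₄` cancels from `γ² = A₄ B₁ / (4 α₁) = 3 |B₁| / (4 B₂ s²)`, which is positive because
`B₂ = s + |B₁| > 0`. Hence `(λ / h₁)² = 1 / (s² γ²) = 4 B₂ / (3 |B₁|) = (4/3)(1 + s / |B₁|)`. -/

lemma mul_div_four_mul_neg_mul_sq {A b₁ b₂ s : ℝ} (hA : A ≠ 0) :
    A * b₁ / (4 * (-(A * b₂ / 3) * s ^ 2)) = 3 * -b₁ / (4 * b₂ * s ^ 2) := by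
  rw [show 4 * (-(A * b₂ / 3) * s ^ 2) = A * (-(4 * b₂ * s ^ 2) / 3) by ring,
    mul_div_mul_left _ _ hA]
  ring

lemma div_sqrt_div_sq {H g h : ℝ} (hg : 0 ≤ g) : (H / √g / h) ^ 2 = H ^ 2 / (g * h ^ 2) := by
  rw [div_pow, div_pow, Real.sq_sqrt hg, div_div]

theorem stmt18_general (h₁ h₂ H S A₄ B₁ B₂ α₁ γ lam : ℝ)
    (hh₁ : 0 < h₁) (hh₂ : 0 < h₂) (hH : H = h₁ + h₂)
    (hS1 : S < 1) (hA₄ : A₄ = 3 * (1 - S))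
    (hB₁ : B₁ < 0) (hB₂ : B₂ = h₁ / H - B₁)
    (hα₁ : α₁ = -(A₄ * B₂ / 3) * (B₁ + B₂) ^ 2)
    (hγ : γ = Real.sqrt (A₄ * B₁ / (4 * α₁))) (hlam : lam = H / γ) :
    0 < A₄ * B₁ / (4 * α₁) ∧
    (lam / h₁) ^ 2 = (4 / 3) * (1 + h₁ / (H * |B₁|)) := by
  have hHpos : 0 < H := by linarith
  have hs : 0 < h₁ / H := div_pos hh₁ hHpos
  have hB₂pos : 0 < B₂ := by linarith
  have hγsq : A₄ * B₁ / (4 * α₁) = 3 * |B₁| / (4 * B₂ * (h₁ / H) ^ 2) := by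
    rw [hα₁, show B₁ + B₂ = h₁ / H by linarith, abs_of_neg hB₁,
      mul_div_four_mul_neg_mul_sq (by rw [hA₄]; linarith)]
  have hpos : 0 < A₄ * B₁ / (4 * α₁) := by
    rw [hγsq]
    have := abs_pos.2 hB₁.ne
    positivity
  refine ⟨hpos, ?_⟩
  rw [hlam, hγ, div_sqrt_div_sq hpos.le, hγsq, hB₂, abs_of_neg hB₁]
  have hB₁ne : B₁ ≠ 0 := hB₁.ne
  field_simp
  ring

theorem stmt18 (h₁ h₂ H S A₄ B₁ B₂ α₁ γ lam : ℝ)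
    (hh₁ : 0 < h₁) (hh₂ : 0 < h₂) (hH : H = h₁ + h₂)
    (hS : 0 < S) (hS1 : S < 1) (hA₄ : A₄ = 3 * (1 - S))
    (hB₁ : B₁ < 0) (hB₂ : B₂ = h₁ / H - B₁)
    (hα₁ : α₁ = -(A₄ * B₂ / 3) * (B₁ + B₂) ^ 2)
    (hγ : γ = Real.sqrt (A₄ * B₁ / (4 * α₁))) (hlam : lam = H / γ) :
    0 < A₄ * B₁ / (4 * α₁) ∧
    (lam / h₁) ^ 2 = (4 / 3) * (1 + h₁ / (H * |B₁|)) :=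
  stmt18_general h₁ h₂ H S A₄ B₁ B₂ α₁ γ lam hh₁ hh₂ hH hS1 hA₄ hB₁ hB₂ hα₁ hγ hlam
end
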